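/- For k = 1, 2 let ρ_k, σ_k be PSD n_k×n_k complex matrices. Then the absolutely continuous part is multiplicative under Kronecker (tensor) products: [σ₁ ⊗ σ₂](ρ₁ ⊗ ρ₂) = ([σ₁]ρ₁) ⊗ ([σ₂]ρ₂), where ⊗ denotes the Kronecker product of matrices. -/

import Mathlib

open Matrix
open scoped ComplexOrder

/-- Functional calculus for Hermitian matrices: apply `f : ℝ → ℝ` to the eigenvalues
in a spectral decomposition (and return `0` on non-Hermitian input). -/
noncomputable def mfun {ι : Type*} [Fintype ι] [DecidableEq ι]
    (f : ℝ → ℝ) (A : Matrix ι ι ℂ) : Matrix ι ι ℂ :=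
  letI := Classical.propDecidable A.IsHermitian
  if hA : A.IsHermitian then hA.cfc f else 0

/-- Real matrix power `A ^ γ` via functional calculus (with `Real.rpow` on eigenvalues,
so that `0 ^ γ = 0` for `γ ≠ 0`, giving the generalized inverse for `γ = -1`). -/
noncomputable def mpow {ι : Type*} [Fintype ι] [DecidableEq ι]
    (A : Matrix ι ι ℂ) (γ : ℝ) : Matrix ι ι ℂ :=
  mfun (fun x => x ^ γ) A

/-- The `γ`-weighted geometric mean
`σ #_γ ρ := σ^{1/2} · (σ^{-1/2} · ρ · σ^{-1/2})^γ · σ^{1/2}`. -/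
noncomputable def geomMean {ι : Type*} [Fintype ι] [DecidableEq ι]
    (σ ρ : Matrix ι ι ℂ) (γ : ℝ) : Matrix ι ι ℂ :=
  mpow σ (1 / 2) * mpow (mpow σ (-(1 / 2)) * ρ * mpow σ (-(1 / 2))) γ * mpow σ (1 / 2)

open scoped Kronecker

/-- The orthogonal projection onto the range of a PSD matrix `σ`, obtained by applying
`x ↦ if x = 0 then 0 else 1` to `σ` via functional calculus. -/
noncomputable def rangeProj {ι : Type*} [Fintype ι] [DecidableEq ι]
    (σ : Matrix ι ι ℂ) : Matrix ι ι ℂ :=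
  mfun (fun x => if x = 0 then 0 else 1) σ

/-- The generalized inverse of a PSD matrix: apply `x ↦ x⁻¹` (with `0⁻¹ = 0`) to the
eigenvalues via functional calculus. -/
noncomputable def ginv {ι : Type*} [Fintype ι] [DecidableEq ι]
    (A : Matrix ι ι ℂ) : Matrix ι ι ℂ :=
  mfun (fun x => x⁻¹) A

/-- The absolutely continuous part of `ρ` with respect to `σ`:
`[σ]ρ := S·ρ·S − S·ρ·S^⊥·(S^⊥·ρ·S^⊥)⁻·S^⊥·ρ·S`, where `S` is the projection onto the
range of `σ` and `S^⊥ := 1 − S`. -/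
noncomputable def acPart {ι : Type*} [Fintype ι] [DecidableEq ι]
    (σ ρ : Matrix ι ι ℂ) : Matrix ι ι ℂ :=
  rangeProj σ * ρ * rangeProj σ
    - rangeProj σ * ρ * (1 - rangeProj σ)
        * ginv ((1 - rangeProj σ) * ρ * (1 - rangeProj σ))
        * (1 - rangeProj σ) * ρ * rangeProj σ

namespace ACAux

open Polynomial

variable {ι κ : Type*} [Fintype ι] [DecidableEq ι] [Fintype κ] [DecidableEq κ]

/-! ### Functional calculus infrastructure -/

noncomputable def conjDiag (V : Matrix ι ι ℂ) (hV : V * Vᴴ = 1) (hV' : Vᴴ * V = 1) :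
    (ι → ℂ) →ₐ[ℂ] Matrix ι ι ℂ where
  toFun x := V * diagonal x * Vᴴ
  map_one' := by
    show V * diagonal (fun _ => (1:ℂ)) * Vᴴ = 1
    rw [show (diagonal fun _ : ι => (1:ℂ)) = 1 from diagonal_one, Matrix.mul_one, hV]
  map_mul' x y := by
    show V * diagonal (x * y) * Vᴴ = V * diagonal x * Vᴴ * (V * diagonal y * Vᴴ)
    simp only [Matrix.mul_assoc]
    rw [← Matrix.mul_assoc Vᴴ V, hV', Matrix.one_mul, ← Matrix.mul_assoc (diagonal x),
      diagonal_mul_diagonal]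
    rfl
  map_zero' := by
    show V * diagonal (fun _ => (0:ℂ)) * Vᴴ = 0
    rw [show (diagonal fun _ : ι => (0:ℂ)) = 0 from diagonal_zero, Matrix.mul_zero,
      Matrix.zero_mul]
  map_add' x y := by
    show V * diagonal (x + y) * Vᴴ = V * diagonal x * Vᴴ + V * diagonal y * Vᴴ
    rw [show diagonal (x + y) = diagonal x + diagonal y by simp [diagonal_add, Pi.add_def],
      Matrix.mul_add, Matrix.add_mul]
  commutes' c := by
    show V * diagonal (fun _ => c) * Vᴴ = _
    rw [show (diagonal fun _ : ι => c) = c • (1 : Matrix ι ι ℂ) by rw [Matrix.smul_one_eq_diagonal],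
      Matrix.mul_smul, Matrix.smul_mul, Matrix.mul_one, hV, Algebra.algebraMap_eq_smul_one]

lemma aeval_conjDiag (V : Matrix ι ι ℂ) (hV : V * Vᴴ = 1) (hV' : Vᴴ * V = 1) (x : ι → ℂ)
    (q : ℂ[X]) :
    aeval (V * diagonal x * Vᴴ) q = V * diagonal (fun i => q.eval (x i)) * Vᴴ := by
  have h := Polynomial.aeval_algHom_apply (conjDiag V hV hV') x q
  simp only [conjDiag, AlgHom.coe_mk, RingHom.coe_mk, MonoidHom.coe_mk, OneHom.coe_mk] at h
  have harg : (aeval x) q = fun i => eval (x i) q := by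
    funext i
    have := Polynomial.aeval_algHom_apply (Pi.evalAlgHom ℂ (fun _ : ι => ℂ) i) x q
    simp only [Pi.evalAlgHom_apply] at this
    rw [← this]; simp [Polynomial.aeval_def, Polynomial.eval₂_eq_eval_map]
  rw [h, harg]

lemma interp_exists (s : Finset ℝ) (f : ℝ → ℝ) : ∃ q : ℝ[X], ∀ x ∈ s, q.eval x = f x := by
  refine ⟨Lagrange.interpolate s id f, fun x hx => ?_⟩
  have := Lagrange.eval_interpolate_at_node (v := id) (r := f) (s := s) (Set.injOn_id _) hx
  simpa using this

lemma eval_map_ofReal (q : ℝ[X]) (r : ℝ) :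
    (q.map (algebraMap ℝ ℂ)).eval (r : ℂ) = ((q.eval r : ℝ) : ℂ) := by
  rw [Polynomial.eval_map]
  exact Polynomial.eval₂_at_apply (algebraMap ℝ ℂ) r

lemma decomp_eq_aeval {A : Matrix ι ι ℂ}
    (V : Matrix ι ι ℂ) (hV : V * Vᴴ = 1) (hV' : Vᴴ * V = 1) (d : ι → ℝ)
    (hAd : A = V * diagonal (fun i => (d i : ℂ)) * Vᴴ) (f : ℝ → ℝ) (q : ℝ[X])
    (hq : ∀ i, q.eval (d i) = f (d i)) :
    aeval A (q.map (algebraMap ℝ ℂ)) = V * diagonal (fun i => (f (d i) : ℂ)) * Vᴴ := by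
  have harg : (fun i => eval ((d i : ℂ)) (q.map (algebraMap ℝ ℂ))) = fun i => ((f (d i) : ℝ) : ℂ) :=
    funext fun i => by rw [eval_map_ofReal, hq]
  rw [hAd, aeval_conjDiag V hV hV', harg]

section

variable {A : Matrix ι ι ℂ}

noncomputable def eU (hA : A.IsHermitian) : Matrix ι ι ℂ := hA.eigenvectorUnitary

lemma eU_mul (hA : A.IsHermitian) : eU hA * (eU hA)ᴴ = 1 := by
  rw [eU, ← Matrix.star_eq_conjTranspose]
  exact Unitary.mul_star_self_of_mem hA.eigenvectorUnitary.2

lemma eU_mul' (hA : A.IsHermitian) : (eU hA)ᴴ * eU hA = 1 := by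
  rw [eU, ← Matrix.star_eq_conjTranspose]
  exact Unitary.star_mul_self_of_mem hA.eigenvectorUnitary.2

lemma eU_spectral (hA : A.IsHermitian) : A = eU hA * diagonal (fun i => ((hA.eigenvalues i : ℝ) : ℂ)) * (eU hA)ᴴ := by
  rw [eU, ← Matrix.star_eq_conjTranspose]
  convert hA.spectral_theorem using 3
  rw [Unitary.conjStarAlgAut_apply]; rfl

lemma mfun_decomp (hA : A.IsHermitian) (V : Matrix ι ι ℂ) (hV : V * Vᴴ = 1) (hV' : Vᴴ * V = 1) (d : ι → ℝ)
    (hAd : A = V * diagonal (fun i => (d i : ℂ)) * Vᴴ) (f : ℝ → ℝ) :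
    mfun f A = V * diagonal (fun i => (f (d i) : ℂ)) * Vᴴ := by
  obtain ⟨q, hq⟩ := interp_exists ((Finset.univ.image hA.eigenvalues) ∪ (Finset.univ.image d)) f
  have h1 : mfun f A = eU hA * diagonal (fun i => ((f (hA.eigenvalues i) : ℝ) : ℂ)) * (eU hA)ᴴ := by
    rw [mfun, dif_pos hA, Matrix.IsHermitian.cfc, eU, ← Matrix.star_eq_conjTranspose]
    rfl
  rw [h1,
    ← decomp_eq_aeval (eU hA) (eU_mul hA) (eU_mul' hA) hA.eigenvalues (eU_spectral hA) f q
      (fun i => hq _ (Finset.mem_union_left _ (Finset.mem_image_of_mem _ (Finset.mem_univ i)))),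
    decomp_eq_aeval V hV hV' d hAd f q
      (fun i => hq _ (Finset.mem_union_right _ (Finset.mem_image_of_mem _ (Finset.mem_univ i))))]

lemma mfun_spectral (hA : A.IsHermitian) (f : ℝ → ℝ) :
    mfun f A = eU hA * diagonal (fun i => ((f (hA.eigenvalues i) : ℝ) : ℂ)) * (eU hA)ᴴ :=
  mfun_decomp hA _ (eU_mul hA) (eU_mul' hA) _ (eU_spectral hA) f

lemma mfun_aeval (hA : A.IsHermitian) (f : ℝ → ℝ) (q : ℝ[X]) (hq : ∀ i, q.eval (hA.eigenvalues i) = f (hA.eigenvalues i)) :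
    mfun f A = aeval A (q.map (algebraMap ℝ ℂ)) := by
  rw [mfun_spectral hA f, ← decomp_eq_aeval (eU hA) (eU_mul hA) (eU_mul' hA) hA.eigenvalues (eU_spectral hA) f q hq]

lemma mfun_isHermitian (hA : A.IsHermitian) (f : ℝ → ℝ) : (mfun f A).IsHermitian := by
  rw [mfun_spectral hA f]
  show _ᴴ = _
  simp only [conjTranspose_mul, conjTranspose_conjTranspose, diagonal_conjTranspose]
  rw [Matrix.mul_assoc]
  congr 2
  funext i
  simp [Pi.star_def]

lemma mfun_mul (hA : A.IsHermitian) {f g h : ℝ → ℝ}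
    (hfgh : ∀ i, f (hA.eigenvalues i) * g (hA.eigenvalues i) = h (hA.eigenvalues i)) :
    mfun f A * mfun g A = mfun h A := by
  rw [mfun_spectral hA f, mfun_spectral hA g, mfun_spectral hA h]
  simp only [Matrix.mul_assoc]
  rw [← Matrix.mul_assoc (eU hA)ᴴ (eU hA), eU_mul' hA, Matrix.one_mul,
    ← Matrix.mul_assoc (diagonal _), diagonal_mul_diagonal]
  have harg : (fun i => ((f (hA.eigenvalues i) : ℂ)) * ((g (hA.eigenvalues i) : ℂ)))
      = fun i => ((h (hA.eigenvalues i) : ℝ) : ℂ) := by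
    funext i; rw [← hfgh i]; push_cast; ring
  rw [harg]

lemma mfun_congr (hA : A.IsHermitian) {f g : ℝ → ℝ} (hfg : ∀ i, f (hA.eigenvalues i) = g (hA.eigenvalues i)) :
    mfun f A = mfun g A := by
  have harg : (fun i => ((f (hA.eigenvalues i) : ℝ) : ℂ)) = fun i => ((g (hA.eigenvalues i) : ℝ) : ℂ) := by
    funext i; rw [hfg i]
  rw [mfun_spectral hA f, mfun_spectral hA g, harg]

lemma mfun_id' (hA : A.IsHermitian) {f : ℝ → ℝ} (hf : ∀ i, f (hA.eigenvalues i) = hA.eigenvalues i) :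
    mfun f A = A := by
  have harg : (fun i => ((f (hA.eigenvalues i) : ℝ) : ℂ)) = fun i => ((hA.eigenvalues i : ℝ) : ℂ) := by
    funext i; rw [hf i]
  conv_rhs => rw [eU_spectral hA]
  rw [mfun_spectral hA f, harg]

lemma mfun_mul_left (hA : A.IsHermitian) {g h : ℝ → ℝ}
    (hgh : ∀ i, hA.eigenvalues i * g (hA.eigenvalues i) = h (hA.eigenvalues i)) :
    A * mfun g A = mfun h A := by
  have := mfun_mul hA (f := fun x => x) (g := g) (h := h) hgh
  rwa [mfun_id' hA (f := fun x => x) (fun i => rfl)] at this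

lemma mfun_mul_right (hA : A.IsHermitian) {f h : ℝ → ℝ}
    (hfh : ∀ i, f (hA.eigenvalues i) * hA.eigenvalues i = h (hA.eigenvalues i)) :
    mfun f A * A = mfun h A := by
  have := mfun_mul hA (f := f) (g := fun x => x) (h := h) hfh
  rwa [mfun_id' hA (f := fun x => x) (fun i => rfl)] at this

lemma mfun_comp (hA : A.IsHermitian) (f g : ℝ → ℝ) : mfun f (mfun g A) = mfun (fun x => f (g x)) A := by
  rw [mfun_spectral hA g,
    mfun_decomp (mfun_spectral hA g ▸ mfun_isHermitian hA g) _ (eU_mul hA) (eU_mul' hA)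
      (fun i => g (hA.eigenvalues i)) rfl f,
    mfun_decomp hA _ (eU_mul hA) (eU_mul' hA) _ (eU_spectral hA) (fun x => f (g x))]

end

/-! ### Polynomial commutation -/

lemma pow_mul_comm_conj (X : Matrix ι ι ℂ) (k : ℕ) :
    (X * Xᴴ) ^ k * X = X * (Xᴴ * X) ^ k := by
  induction k with
  | zero => simp
  | succ k ih =>
    rw [pow_succ', pow_succ', Matrix.mul_assoc (X * Xᴴ), ih]
    simp only [Matrix.mul_assoc]

lemma aeval_mul_comm_conj (X : Matrix ι ι ℂ) (qc : ℂ[X]) :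
    aeval (X * Xᴴ) qc * X = X * aeval (Xᴴ * X) qc := by
  rw [Polynomial.aeval_eq_sum_range (p := qc) (X * Xᴴ), Polynomial.aeval_eq_sum_range (p := qc) (Xᴴ * X),
    Finset.sum_mul, Finset.mul_sum]
  refine Finset.sum_congr rfl fun i _ => ?_
  rw [smul_mul_assoc, mul_smul_comm, pow_mul_comm_conj]

lemma mfun_conj_swap (X : Matrix ι ι ℂ) (f : ℝ → ℝ) :
    mfun f (X * Xᴴ) * X = X * mfun f (Xᴴ * X) := by
  have hL : (X * Xᴴ).IsHermitian := (Matrix.posSemidef_self_mul_conjTranspose X).1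
  have hR : (Xᴴ * X).IsHermitian := (Matrix.posSemidef_conjTranspose_mul_self X).1
  obtain ⟨q, hq⟩ := interp_exists
    ((Finset.univ.image hL.eigenvalues) ∪ (Finset.univ.image hR.eigenvalues)) f
  rw [mfun_aeval hL f q
      (fun i => hq _ (Finset.mem_union_left _ (Finset.mem_image_of_mem _ (Finset.mem_univ i)))),
    mfun_aeval hR f q
      (fun i => hq _ (Finset.mem_union_right _ (Finset.mem_image_of_mem _ (Finset.mem_univ i)))),
    aeval_mul_comm_conj]

lemma mfun_mul_fixed {A : Matrix ι ι ℂ} (hA : A.IsHermitian) (f : ℝ → ℝ)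
    (X : Matrix ι ι ℂ) (hX : A * X = X) : mfun f A * X = (f 1 : ℂ) • X := by
  obtain ⟨q, hq⟩ := interp_exists (insert (1:ℝ) (Finset.univ.image hA.eigenvalues)) f
  have hpow : ∀ k : ℕ, A ^ k * X = X := by
    intro k
    induction k with
    | zero => simp
    | succ k ih => rw [pow_succ, Matrix.mul_assoc, hX, ih]
  rw [mfun_aeval hA f q
    (fun i => hq _ (Finset.mem_insert_of_mem (Finset.mem_image_of_mem _ (Finset.mem_univ i)))),
    Polynomial.aeval_eq_sum_range (p := q.map (algebraMap ℝ ℂ)) A, Finset.sum_mul]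
  have : ∀ i ∈ Finset.range ((q.map (algebraMap ℝ ℂ)).natDegree + 1),
      (q.map (algebraMap ℝ ℂ)).coeff i • A ^ i * X = (q.map (algebraMap ℝ ℂ)).coeff i • X := by
    intro i _
    rw [smul_mul_assoc, hpow]
  rw [Finset.sum_congr rfl this, ← Finset.sum_smul]
  congr 1
  have h1 : ((q.map (algebraMap ℝ ℂ))).eval 1 = (f 1 : ℂ) := by
    have := eval_map_ofReal q 1
    rw [Complex.ofReal_one] at this
    rw [this, hq 1 (Finset.mem_insert_self _ _)]
  rw [← h1, Polynomial.eval_eq_sum_range]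
  simp

/-! ### Kronecker products -/

lemma kron_conjTranspose (A : Matrix ι ι ℂ) (B : Matrix κ κ ℂ) : (A ⊗ₖ B)ᴴ = Aᴴ ⊗ₖ Bᴴ := by
  ext ⟨i,j⟩ ⟨k,l⟩
  simp [conjTranspose_apply, kroneckerMap_apply]

lemma kron_isHermitian {A : Matrix ι ι ℂ} {B : Matrix κ κ ℂ}
    (hA : A.IsHermitian) (hB : B.IsHermitian) : (A ⊗ₖ B).IsHermitian := by
  show _ᴴ = _
  rw [kron_conjTranspose, hA.eq, hB.eq]

lemma mfun_kron {A : Matrix ι ι ℂ} {B : Matrix κ κ ℂ}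
    (hA : A.IsHermitian) (hB : B.IsHermitian) (f : ℝ → ℝ)
    (hf : ∀ i j, f (hA.eigenvalues i * hB.eigenvalues j)
      = f (hA.eigenvalues i) * f (hB.eigenvalues j)) :
    mfun f (A ⊗ₖ B) = mfun f A ⊗ₖ mfun f B := by
  have hVmul : (eU hA ⊗ₖ eU hB) * (eU hA ⊗ₖ eU hB)ᴴ = 1 := by
    rw [kron_conjTranspose, ← Matrix.mul_kronecker_mul, eU_mul hA, eU_mul hB,
      Matrix.one_kronecker_one]
  have hVmul' : (eU hA ⊗ₖ eU hB)ᴴ * (eU hA ⊗ₖ eU hB) = 1 := by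
    rw [kron_conjTranspose, ← Matrix.mul_kronecker_mul, eU_mul' hA, eU_mul' hB,
      Matrix.one_kronecker_one]
  have hdiag : ∀ g : ℝ → ℝ,
      (diagonal fun i : ι => ((g (hA.eigenvalues i) : ℝ) : ℂ)) ⊗ₖ
        (diagonal fun j : κ => ((g (hB.eigenvalues j) : ℝ) : ℂ))
      = diagonal (fun p : ι × κ => ((g (hA.eigenvalues p.1) * g (hB.eigenvalues p.2) : ℝ) : ℂ)) := by
    intro g
    rw [Matrix.diagonal_kronecker_diagonal]
    congr 1
    funext p
    push_cast
    rfl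
  have hdec : A ⊗ₖ B = (eU hA ⊗ₖ eU hB) *
      diagonal (fun p : ι × κ => ((hA.eigenvalues p.1 * hB.eigenvalues p.2 : ℝ) : ℂ)) *
      (eU hA ⊗ₖ eU hB)ᴴ := by
    conv_lhs => rw [eU_spectral hA, eU_spectral hB]
    rw [Matrix.mul_kronecker_mul, Matrix.mul_kronecker_mul, kron_conjTranspose,
      hdiag (fun x => x)]
  rw [mfun_decomp (kron_isHermitian hA hB) _ hVmul hVmul' _ hdec f,
    mfun_spectral hA f, mfun_spectral hB f,
    Matrix.mul_kronecker_mul, Matrix.mul_kronecker_mul, kron_conjTranspose, hdiag f]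
  have harg : (fun p : ι × κ => ((f (hA.eigenvalues p.1 * hB.eigenvalues p.2) : ℝ) : ℂ))
      = fun p : ι × κ => ((f (hA.eigenvalues p.1) * f (hB.eigenvalues p.2) : ℝ) : ℂ) := by
    funext p
    rw [hf p.1 p.2]
  rw [harg]

/-! ### Per-factor theory -/

noncomputable def Wm (ρ : Matrix ι ι ℂ) : Matrix ι ι ℂ := mfun Real.sqrt ρ

noncomputable def Bm (σ ρ : Matrix ι ι ℂ) : Matrix ι ι ℂ :=
  Wm ρ * (1 - rangeProj σ) * Wm ρ

noncomputable def Em (σ ρ : Matrix ι ι ℂ) : Matrix ι ι ℂ := 1 - rangeProj (Bm σ ρ)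

noncomputable def Mm (σ ρ : Matrix ι ι ℂ) : Matrix ι ι ℂ :=
  mfun (fun x => if x = 1 then 1 else 0) (rangeProj σ * rangeProj ρ * rangeProj σ)

section PerFactor

variable {σ ρ : Matrix ι ι ℂ}

lemma proj_herm (h : σ.PosSemidef) : (rangeProj σ).IsHermitian :=
  mfun_isHermitian h.1 _

lemma proj_idem (h : σ.PosSemidef) : rangeProj σ * rangeProj σ = rangeProj σ :=
  mfun_mul h.1 (fun i => by by_cases hx : h.1.eigenvalues i = 0 <;> simp [hx])

lemma oneSub_herm {A : Matrix ι ι ℂ} (h : A.IsHermitian) : (1 - A).IsHermitian :=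
  (Matrix.isHermitian_one).sub h

lemma oneSub_idem {A : Matrix ι ι ℂ} (h : A * A = A) : (1 - A) * (1 - A) = 1 - A := by
  rw [Matrix.mul_sub, Matrix.sub_mul, Matrix.sub_mul, h]
  simp

lemma proj_psd (h : σ.PosSemidef) : (rangeProj σ).PosSemidef := by
  have := Matrix.posSemidef_conjTranspose_mul_self (rangeProj σ)
  rwa [(proj_herm h).eq, proj_idem h] at this

lemma oneSubProj_psd (h : σ.PosSemidef) : (1 - rangeProj σ).PosSemidef := by
  have := Matrix.posSemidef_conjTranspose_mul_self (1 - rangeProj σ)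
  rwa [(oneSub_herm (proj_herm h)).eq, oneSub_idem (proj_idem h)] at this

lemma W_herm (h : ρ.PosSemidef) : (Wm ρ).IsHermitian := mfun_isHermitian h.1 _

lemma W_mul_W (h : ρ.PosSemidef) : Wm ρ * Wm ρ = ρ := by
  rw [Wm, mfun_mul h.1 (h := fun x => x)
    (fun i => Real.mul_self_sqrt (h.eigenvalues_nonneg i))]
  exact mfun_id' h.1 (f := fun x => x) (fun i => rfl)

lemma Q_mul_W (h : ρ.PosSemidef) : rangeProj ρ * Wm ρ = Wm ρ :=
  mfun_mul h.1 (fun i => by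
    by_cases hx : h.1.eigenvalues i = 0 <;> simp [hx, Real.sqrt_eq_zero'])

lemma W_mul_Q (h : ρ.PosSemidef) : Wm ρ * rangeProj ρ = Wm ρ :=
  mfun_mul h.1 (fun i => by
    by_cases hx : h.1.eigenvalues i = 0 <;> simp [hx, Real.sqrt_eq_zero'])

lemma ginvW_eq (h : ρ.PosSemidef) : ginv (Wm ρ) = mfun (fun x => (Real.sqrt x)⁻¹) ρ := by
  rw [ginv, Wm, mfun_comp h.1]

lemma ginvW_mul_W (h : ρ.PosSemidef) : ginv (Wm ρ) * Wm ρ = rangeProj ρ := by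
  rw [ginvW_eq h, Wm, rangeProj]
  refine mfun_mul h.1 (fun i => ?_)
  rcases lt_or_eq_of_le (h.eigenvalues_nonneg i) with hx | hx
  · rw [inv_mul_cancel₀ (by positivity), if_neg (by positivity)]
  · simp [← hx]

lemma W_mul_ginvW (h : ρ.PosSemidef) : Wm ρ * ginv (Wm ρ) = rangeProj ρ := by
  rw [ginvW_eq h, Wm, rangeProj]
  refine mfun_mul h.1 (fun i => ?_)
  rcases lt_or_eq_of_le (h.eigenvalues_nonneg i) with hx | hx
  · rw [mul_inv_cancel₀ (by positivity), if_neg (by positivity)]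
  · simp [← hx]

lemma B_eq_conj (hσ : σ.PosSemidef) (hρ : ρ.PosSemidef) :
    Bm σ ρ = ((1 - rangeProj σ) * Wm ρ)ᴴ * ((1 - rangeProj σ) * Wm ρ) := by
  rw [Matrix.conjTranspose_mul, (W_herm hρ).eq, (oneSub_herm (proj_herm hσ)).eq, Bm]
  simp only [Matrix.mul_assoc]
  rw [← Matrix.mul_assoc (1 - rangeProj σ) (1 - rangeProj σ), oneSub_idem (proj_idem hσ)]

lemma B_psd (hσ : σ.PosSemidef) (hρ : ρ.PosSemidef) : (Bm σ ρ).PosSemidef := by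
  rw [B_eq_conj hσ hρ]
  exact Matrix.posSemidef_conjTranspose_mul_self _

lemma B_mul_R (hσ : σ.PosSemidef) (hρ : ρ.PosSemidef) :
    Bm σ ρ * rangeProj (Bm σ ρ) = Bm σ ρ := by
  rw [rangeProj, mfun_mul_left (B_psd hσ hρ).1 (h := fun x => x)
    (fun i => by by_cases hx : (B_psd hσ hρ).1.eigenvalues i = 0 <;> simp [hx])]
  exact mfun_id' (B_psd hσ hρ).1 (f := fun x => x) (fun i => rfl)

lemma B_mul_E (hσ : σ.PosSemidef) (hρ : ρ.PosSemidef) : Bm σ ρ * Em σ ρ = 0 := by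
  rw [Em, Matrix.mul_sub, Matrix.mul_one, B_mul_R hσ hρ, sub_self]

lemma ginvB_mul_B (hσ : σ.PosSemidef) (hρ : ρ.PosSemidef) :
    ginv (Bm σ ρ) * Bm σ ρ = rangeProj (Bm σ ρ) := by
  rw [ginv, rangeProj]
  exact mfun_mul_right (B_psd hσ hρ).1 (f := fun x => x⁻¹)
    (fun i => by by_cases hx : (B_psd hσ hρ).1.eigenvalues i = 0 <;> simp [hx])

lemma B_mul_ginvB (hσ : σ.PosSemidef) (hρ : ρ.PosSemidef) :
    Bm σ ρ * ginv (Bm σ ρ) = rangeProj (Bm σ ρ) := by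
  rw [ginv, rangeProj]
  exact mfun_mul_left (B_psd hσ hρ).1 (g := fun x => x⁻¹)
    (fun i => by by_cases hx : (B_psd hσ hρ).1.eigenvalues i = 0 <;> simp [hx])

lemma E_herm (hσ : σ.PosSemidef) (hρ : ρ.PosSemidef) : (Em σ ρ).IsHermitian :=
  oneSub_herm (proj_herm (B_psd hσ hρ))

lemma E_idem (hσ : σ.PosSemidef) (hρ : ρ.PosSemidef) : Em σ ρ * Em σ ρ = Em σ ρ :=
  oneSub_idem (proj_idem (B_psd hσ hρ))

lemma PWE_zero (hσ : σ.PosSemidef) (hρ : ρ.PosSemidef) :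
    (1 - rangeProj σ) * (Wm ρ * Em σ ρ) = 0 := by
  rw [← Matrix.conjTranspose_mul_self_eq_zero (A := (1 - rangeProj σ) * (Wm ρ * Em σ ρ))]
  have hct : ((1 - rangeProj σ) * (Wm ρ * Em σ ρ))ᴴ = Em σ ρ * Wm ρ * (1 - rangeProj σ) := by
    simp only [Matrix.conjTranspose_mul, (W_herm hρ).eq, (oneSub_herm (proj_herm hσ)).eq,
      (E_herm hσ hρ).eq, Matrix.mul_assoc]
  rw [hct]
  calc Em σ ρ * Wm ρ * (1 - rangeProj σ) * ((1 - rangeProj σ) * (Wm ρ * Em σ ρ))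
      = Em σ ρ * (Wm ρ * ((1 - rangeProj σ) * (1 - rangeProj σ)) * (Wm ρ * Em σ ρ)) := by
        simp only [Matrix.mul_assoc]
    _ = Em σ ρ * (Bm σ ρ * Em σ ρ) := by
        rw [oneSub_idem (proj_idem hσ), Bm]
        simp only [Matrix.mul_assoc]
    _ = 0 := by rw [B_mul_E hσ hρ, Matrix.mul_zero]

lemma SWE (hσ : σ.PosSemidef) (hρ : ρ.PosSemidef) :
    rangeProj σ * (Wm ρ * Em σ ρ) = Wm ρ * Em σ ρ := by
  have := PWE_zero hσ hρ
  rw [Matrix.sub_mul, Matrix.one_mul, sub_eq_zero] at this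
  exact this.symm

lemma EWS (hσ : σ.PosSemidef) (hρ : ρ.PosSemidef) :
    Em σ ρ * Wm ρ * rangeProj σ = Em σ ρ * Wm ρ := by
  have h := congrArg Matrix.conjTranspose (SWE hσ hρ)
  simp only [Matrix.conjTranspose_mul, (W_herm hρ).eq, (proj_herm hσ).eq,
    (E_herm hσ hρ).eq] at h
  simpa only [Matrix.mul_assoc] using h

lemma swap_key (hσ : σ.PosSemidef) (hρ : ρ.PosSemidef) :
    ginv ((1 - rangeProj σ) * ρ * (1 - rangeProj σ)) * ((1 - rangeProj σ) * Wm ρ)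
      = ((1 - rangeProj σ) * Wm ρ) * ginv (Bm σ ρ) := by
  have hN : ((1 - rangeProj σ) * Wm ρ) * ((1 - rangeProj σ) * Wm ρ)ᴴ
      = (1 - rangeProj σ) * ρ * (1 - rangeProj σ) := by
    rw [Matrix.conjTranspose_mul, (W_herm hρ).eq, (oneSub_herm (proj_herm hσ)).eq,
      Matrix.mul_assoc (1 - rangeProj σ) (Wm ρ) (Wm ρ * (1 - rangeProj σ)),
      ← Matrix.mul_assoc (Wm ρ) (Wm ρ) (1 - rangeProj σ), W_mul_W hρ,
      ← Matrix.mul_assoc]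
  have hNN : ((1 - rangeProj σ) * Wm ρ)ᴴ * ((1 - rangeProj σ) * Wm ρ) = Bm σ ρ :=
    (B_eq_conj hσ hρ).symm
  have h := mfun_conj_swap ((1 - rangeProj σ) * Wm ρ) (fun x => x⁻¹)
  rw [hNN] at h
  rw [ginv, ← hN, h, ginv]

lemma abstract_key (ρ S W E G Gb B R : Matrix ι ι ℂ)
    (hρWW : ρ = W * W)
    (hPP : (1-S)*(1-S) = 1-S)
    (hB : W * ((1-S) * W) = B)
    (hswap : G * ((1-S) * W) = (1-S) * W * Gb)
    (hBR : B * Gb = R)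
    (hE : E = 1 - R)
    (hSWE : S * (W * E) = W * E)
    (hEWS : E * (W * S) = E * W)
    (hEE : E * E = E) :
    S * ρ * S - S * ρ * (1-S) * G * (1-S) * ρ * S = W * E * W := by
  rw [hρWW]
  simp only [Matrix.mul_assoc]
  rw [← Matrix.mul_assoc (1-S) W (W * S), ← Matrix.mul_assoc G ((1-S) * W) (W * S), hswap]
  simp only [Matrix.mul_assoc]
  rw [← Matrix.mul_assoc (1-S) (1-S) (W * (Gb * (W * S))), hPP,
    ← Matrix.mul_assoc (1-S) W (Gb * (W * S)),
    ← Matrix.mul_assoc W ((1-S) * W) (Gb * (W * S)), hB,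
    ← Matrix.mul_assoc B Gb (W * S), hBR]
  have step : S * (W * (W * S)) - S * (W * (R * (W * S))) = S * (W * (E * (W * S))) := by
    rw [hE, Matrix.sub_mul, Matrix.one_mul]
    simp only [Matrix.mul_sub]
  rw [step, ← hEE, Matrix.mul_assoc E E (W * S), hEWS,
    ← Matrix.mul_assoc W E (E * W), ← Matrix.mul_assoc S (W * E) (E * W), hSWE]
  simp only [Matrix.mul_assoc]

lemma acPart_eq (hσ : σ.PosSemidef) (hρ : ρ.PosSemidef) :
    acPart σ ρ = Wm ρ * Em σ ρ * Wm ρ := by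
  rw [acPart]
  refine abstract_key ρ (rangeProj σ) (Wm ρ) (Em σ ρ)
    (ginv ((1 - rangeProj σ) * ρ * (1 - rangeProj σ))) (ginv (Bm σ ρ)) (Bm σ ρ)
    (rangeProj (Bm σ ρ)) (W_mul_W hρ).symm (oneSub_idem (proj_idem hσ)) ?_
    ?_ (B_mul_ginvB hσ hρ) rfl (SWE hσ hρ) ?_ (E_idem hσ hρ)
  · rw [Bm, Matrix.mul_assoc]
  · rw [swap_key hσ hρ]
  · rw [← Matrix.mul_assoc, EWS hσ hρ]

lemma B_mul_oneSubQ (hσ : σ.PosSemidef) (hρ : ρ.PosSemidef) :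
    Bm σ ρ * (1 - rangeProj ρ) = 0 := by
  rw [Bm, Matrix.mul_sub, Matrix.mul_one]
  simp only [Matrix.mul_assoc]
  rw [W_mul_Q hρ, sub_self]

lemma R_mul_oneSubQ (hσ : σ.PosSemidef) (hρ : ρ.PosSemidef) :
    rangeProj (Bm σ ρ) * (1 - rangeProj ρ) = 0 := by
  rw [← ginvB_mul_B hσ hρ, Matrix.mul_assoc, B_mul_oneSubQ hσ hρ, Matrix.mul_zero]

lemma E_mul_Q_comm (hσ : σ.PosSemidef) (hρ : ρ.PosSemidef) :
    Em σ ρ * rangeProj ρ = rangeProj ρ * Em σ ρ := by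
  have h1 : Em σ ρ * (1 - rangeProj ρ) = 1 - rangeProj ρ := by
    rw [Em, Matrix.sub_mul, Matrix.one_mul, R_mul_oneSubQ hσ hρ, sub_zero]
  have h2 : Em σ ρ * rangeProj ρ = Em σ ρ - 1 + rangeProj ρ := by
    rw [Matrix.mul_sub, Matrix.mul_one] at h1
    calc Em σ ρ * rangeProj ρ = Em σ ρ - (Em σ ρ - Em σ ρ * rangeProj ρ) := by abel
      _ = Em σ ρ - (1 - rangeProj ρ) := by rw [h1]
      _ = Em σ ρ - 1 + rangeProj ρ := by abel
  have h3 : (Em σ ρ - 1 + rangeProj ρ).IsHermitian := by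
    have := ((E_herm hσ hρ).sub Matrix.isHermitian_one).add (proj_herm hρ)
    exact this
  calc Em σ ρ * rangeProj ρ = (Em σ ρ * rangeProj ρ)ᴴ := by rw [h2, h3.eq]
    _ = rangeProj ρ * Em σ ρ := by
        rw [Matrix.conjTranspose_mul, (E_herm hσ hρ).eq, (proj_herm hρ).eq]

/-! ### The projection onto the intersection of ranges -/

lemma T_herm (hσ : σ.PosSemidef) (hρ : ρ.PosSemidef) :
    (rangeProj σ * rangeProj ρ * rangeProj σ).IsHermitian := by
  show _ᴴ = _
  simp only [Matrix.conjTranspose_mul, (proj_herm hσ).eq, (proj_herm hρ).eq, Matrix.mul_assoc]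

lemma T_psd (hσ : σ.PosSemidef) (hρ : ρ.PosSemidef) :
    (rangeProj σ * rangeProj ρ * rangeProj σ).PosSemidef := by
  have h := Matrix.posSemidef_conjTranspose_mul_self (rangeProj ρ * rangeProj σ)
  rwa [Matrix.conjTranspose_mul, (proj_herm hσ).eq, (proj_herm hρ).eq, Matrix.mul_assoc,
    ← Matrix.mul_assoc (rangeProj ρ), proj_idem hρ, ← Matrix.mul_assoc] at h
  
lemma T_mul_M (hσ : σ.PosSemidef) (hρ : ρ.PosSemidef) :
    (rangeProj σ * rangeProj ρ * rangeProj σ) * Mm σ ρ = Mm σ ρ := by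
  rw [Mm]
  exact mfun_mul_left (T_psd hσ hρ).1
    (fun i => by by_cases hx : (T_psd hσ hρ).1.eigenvalues i = 1 <;> simp [hx])

lemma M_herm (hσ : σ.PosSemidef) (hρ : ρ.PosSemidef) : (Mm σ ρ).IsHermitian :=
  mfun_isHermitian (T_psd hσ hρ).1 _

lemma M_idem (hσ : σ.PosSemidef) (hρ : ρ.PosSemidef) : Mm σ ρ * Mm σ ρ = Mm σ ρ :=
  mfun_mul (T_psd hσ hρ).1
    (fun i => by by_cases hx : (T_psd hσ hρ).1.eigenvalues i = 1 <;> simp [hx])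

lemma S_mul_M (hσ : σ.PosSemidef) (hρ : ρ.PosSemidef) :
    rangeProj σ * Mm σ ρ = Mm σ ρ := by
  have h0 : (1 - rangeProj σ) * (rangeProj σ * rangeProj ρ * rangeProj σ) = 0 := by
    rw [Matrix.sub_mul, Matrix.one_mul, ← Matrix.mul_assoc, ← Matrix.mul_assoc,
      proj_idem hσ, sub_self]
  have h1 : (1 - rangeProj σ) * Mm σ ρ = 0 := by
    rw [← T_mul_M hσ hρ, ← Matrix.mul_assoc, h0, Matrix.zero_mul]
  rw [Matrix.sub_mul, Matrix.one_mul, sub_eq_zero] at h1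
  exact h1.symm

lemma M_mul_S (hσ : σ.PosSemidef) (hρ : ρ.PosSemidef) :
    Mm σ ρ * rangeProj σ = Mm σ ρ := by
  have h := congrArg Matrix.conjTranspose (S_mul_M hσ hρ)
  rwa [Matrix.conjTranspose_mul, (M_herm hσ hρ).eq, (proj_herm hσ).eq] at h

lemma Q_mul_M (hσ : σ.PosSemidef) (hρ : ρ.PosSemidef) :
    rangeProj ρ * Mm σ ρ = Mm σ ρ := by
  have hMQM : Mm σ ρ * rangeProj ρ * Mm σ ρ = Mm σ ρ := by
    calc Mm σ ρ * rangeProj ρ * Mm σ ρ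
        = Mm σ ρ * rangeProj σ * rangeProj ρ * (rangeProj σ * Mm σ ρ) := by
          rw [M_mul_S hσ hρ, S_mul_M hσ hρ]
      _ = Mm σ ρ * (rangeProj σ * rangeProj ρ * rangeProj σ * Mm σ ρ) := by
          simp only [Matrix.mul_assoc]
      _ = Mm σ ρ * Mm σ ρ := by rw [T_mul_M hσ hρ]
      _ = Mm σ ρ := M_idem hσ hρ
  have hX : ((1 - rangeProj ρ) * Mm σ ρ)ᴴ * ((1 - rangeProj ρ) * Mm σ ρ) = 0 := by
    rw [Matrix.conjTranspose_mul, (M_herm hσ hρ).eq, (oneSub_herm (proj_herm hρ)).eq]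
    calc Mm σ ρ * (1 - rangeProj ρ) * ((1 - rangeProj ρ) * Mm σ ρ)
        = Mm σ ρ * ((1 - rangeProj ρ) * (1 - rangeProj ρ)) * Mm σ ρ := by
          simp only [Matrix.mul_assoc]
      _ = Mm σ ρ * (1 - rangeProj ρ) * Mm σ ρ := by rw [oneSub_idem (proj_idem hρ)]
      _ = Mm σ ρ * Mm σ ρ - Mm σ ρ * rangeProj ρ * Mm σ ρ := by
          rw [Matrix.mul_sub, Matrix.mul_one, Matrix.sub_mul]
      _ = 0 := by rw [M_idem hσ hρ, hMQM, sub_self]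
  have h := Matrix.conjTranspose_mul_self_eq_zero.mp hX
  rw [Matrix.sub_mul, Matrix.one_mul, sub_eq_zero] at h
  exact h.symm

lemma M_mul_Q (hσ : σ.PosSemidef) (hρ : ρ.PosSemidef) :
    Mm σ ρ * rangeProj ρ = Mm σ ρ := by
  have h := congrArg Matrix.conjTranspose (Q_mul_M hσ hρ)
  rwa [Matrix.conjTranspose_mul, (M_herm hσ hρ).eq, (proj_herm hρ).eq] at h

lemma E_mul_ginvW_M (hσ : σ.PosSemidef) (hρ : ρ.PosSemidef) :
    Em σ ρ * (ginv (Wm ρ) * Mm σ ρ) = ginv (Wm ρ) * Mm σ ρ := by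
  have hBx : Bm σ ρ * (ginv (Wm ρ) * Mm σ ρ) = 0 := by
    calc Bm σ ρ * (ginv (Wm ρ) * Mm σ ρ)
        = Wm ρ * (1 - rangeProj σ) * (Wm ρ * ginv (Wm ρ)) * Mm σ ρ := by
          rw [Bm]; simp only [Matrix.mul_assoc]
      _ = Wm ρ * (1 - rangeProj σ) * (rangeProj ρ * Mm σ ρ) := by
          rw [W_mul_ginvW hρ]; simp only [Matrix.mul_assoc]
      _ = Wm ρ * ((1 - rangeProj σ) * Mm σ ρ) := by
          rw [Q_mul_M hσ hρ]; simp only [Matrix.mul_assoc]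
      _ = 0 := by
          rw [Matrix.sub_mul, Matrix.one_mul, S_mul_M hσ hρ, sub_self, Matrix.mul_zero]
  have hRx : rangeProj (Bm σ ρ) * (ginv (Wm ρ) * Mm σ ρ) = 0 := by
    rw [← ginvB_mul_B hσ hρ, Matrix.mul_assoc, hBx, Matrix.mul_zero]
  rw [Em, Matrix.sub_mul, Matrix.one_mul, hRx, sub_zero]

lemma oneSubT_psd (hσ : σ.PosSemidef) (hρ : ρ.PosSemidef) :
    (1 - rangeProj σ * rangeProj ρ * rangeProj σ).PosSemidef := by
  have h1 : (1 - rangeProj σ).PosSemidef := oneSubProj_psd hσ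
  have h2 : (rangeProj σ * (1 - rangeProj ρ) * rangeProj σ).PosSemidef := by
    have h := Matrix.posSemidef_conjTranspose_mul_self ((1 - rangeProj ρ) * rangeProj σ)
    rwa [Matrix.conjTranspose_mul, (proj_herm hσ).eq, (oneSub_herm (proj_herm hρ)).eq,
      Matrix.mul_assoc, ← Matrix.mul_assoc (1 - rangeProj ρ), oneSub_idem (proj_idem hρ),
      ← Matrix.mul_assoc] at h
  have key : 1 - rangeProj σ * rangeProj ρ * rangeProj σ
      = (1 - rangeProj σ) + rangeProj σ * (1 - rangeProj ρ) * rangeProj σ := by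
    rw [Matrix.mul_sub, Matrix.mul_one, Matrix.sub_mul, proj_idem hσ]
    abel
  rw [key]
  exact h1.add h2

lemma WSW_mul_E (hσ : σ.PosSemidef) (hρ : ρ.PosSemidef) :
    Wm ρ * rangeProj σ * Wm ρ * Em σ ρ = ρ * Em σ ρ := by
  calc Wm ρ * rangeProj σ * Wm ρ * Em σ ρ
      = Wm ρ * (rangeProj σ * (Wm ρ * Em σ ρ)) := by simp only [Matrix.mul_assoc]
    _ = Wm ρ * (Wm ρ * Em σ ρ) := by rw [SWE hσ hρ]
    _ = ρ * Em σ ρ := by rw [← Matrix.mul_assoc, W_mul_W hρ]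

end PerFactor

/-! ### Eigenvalue bounds -/

lemma eigenvalues_le_one {T : Matrix ι ι ℂ} (hT : T.PosSemidef) (h1 : (1 - T).PosSemidef)
    (i : ι) : hT.1.eigenvalues i ≤ 1 := by
  have hv : hT.1.eigenvalues i
      = RCLike.re (dotProduct (star ⇑(hT.1.eigenvectorBasis i))
          (T *ᵥ ⇑(hT.1.eigenvectorBasis i))) := hT.1.eigenvalues_eq i
  have hnn := h1.re_dotProduct_nonneg ⇑(hT.1.eigenvectorBasis i)
  have hvv : RCLike.re (dotProduct (star ⇑(hT.1.eigenvectorBasis i))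
      ⇑(hT.1.eigenvectorBasis i)) = 1 := by
    rw [dotProduct_comm, ← EuclideanSpace.inner_eq_star_dotProduct, inner_self_eq_norm_sq_to_K]
    simp [hT.1.eigenvectorBasis.orthonormal.1 i]
  rw [Matrix.sub_mulVec, Matrix.one_mulVec, dotProduct_sub, map_sub, ← hv, hvv] at hnn
  linarith

/-! ### Kronecker lemmas -/

section Kron

variable {A : Matrix ι ι ℂ} {B : Matrix κ κ ℂ}

lemma kron_psd (hA : A.PosSemidef) (hB : B.PosSemidef) : (A ⊗ₖ B).PosSemidef := by
  have h := Matrix.posSemidef_conjTranspose_mul_self (Wm A ⊗ₖ Wm B)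
  rwa [kron_conjTranspose, (W_herm hA).eq, (W_herm hB).eq, ← Matrix.mul_kronecker_mul,
    W_mul_W hA, W_mul_W hB] at h

lemma rangeProj_kron (hA : A.PosSemidef) (hB : B.PosSemidef) :
    rangeProj (A ⊗ₖ B) = rangeProj A ⊗ₖ rangeProj B := by
  rw [rangeProj, rangeProj, rangeProj]
  exact mfun_kron hA.1 hB.1 _ (fun i j => by
    by_cases hx : hA.1.eigenvalues i = 0 <;> by_cases hy : hB.1.eigenvalues j = 0 <;>
      simp [hx, hy, mul_eq_zero])

lemma W_kron (hA : A.PosSemidef) (hB : B.PosSemidef) :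
    Wm (A ⊗ₖ B) = Wm A ⊗ₖ Wm B := by
  rw [Wm, Wm, Wm]
  exact mfun_kron hA.1 hB.1 _ (fun i j => Real.sqrt_mul (hA.eigenvalues_nonneg i) _)

lemma ginvW_kron (hA : A.PosSemidef) (hB : B.PosSemidef) :
    ginv (Wm A ⊗ₖ Wm B) = ginv (Wm A) ⊗ₖ ginv (Wm B) := by
  rw [ginv, ginv, ginv]
  exact mfun_kron (W_herm hA) (W_herm hB) _ (fun i j => mul_inv _ _)

end Kron

lemma M_kron {ρ₁ σ₁ : Matrix ι ι ℂ} {ρ₂ σ₂ : Matrix κ κ ℂ}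
    (hρ₁ : ρ₁.PosSemidef) (hσ₁ : σ₁.PosSemidef) (hρ₂ : ρ₂.PosSemidef) (hσ₂ : σ₂.PosSemidef) :
    Mm (σ₁ ⊗ₖ σ₂) (ρ₁ ⊗ₖ ρ₂) = Mm σ₁ ρ₁ ⊗ₖ Mm σ₂ ρ₂ := by
  rw [Mm, Mm, Mm, rangeProj_kron hσ₁ hσ₂, rangeProj_kron hρ₁ hρ₂,
    ← Matrix.mul_kronecker_mul, ← Matrix.mul_kronecker_mul]
  refine mfun_kron (T_herm hσ₁ hρ₁) (T_herm hσ₂ hρ₂) _ (fun i j => ?_)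
  have hx0 := (T_psd hσ₁ hρ₁).eigenvalues_nonneg i
  have hy0 := (T_psd hσ₂ hρ₂).eigenvalues_nonneg j
  have hx1 := eigenvalues_le_one (T_psd hσ₁ hρ₁) (oneSubT_psd hσ₁ hρ₁) i
  have hy1 := eigenvalues_le_one (T_psd hσ₂ hρ₂) (oneSubT_psd hσ₂ hρ₂) j
  set x := (T_psd hσ₁ hρ₁).1.eigenvalues i
  set y := (T_psd hσ₂ hρ₂).1.eigenvalues j
  by_cases hx : x = 1 <;> by_cases hy : y = 1
  · simp [hx, hy]
  · have hne : x * y ≠ 1 := by rw [hx, one_mul]; exact hy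
    simp [hx, hy, hne]
  · have hne : x * y ≠ 1 := by rw [hy, mul_one]; exact hx
    simp [hx, hy, hne]
  · have hlt : x * y < 1 := by
      rcases lt_of_le_of_ne hx1 hx with h
      calc x * y ≤ x * 1 := by nlinarith
        _ < 1 := by nlinarith
    simp [hx, hy, ne_of_lt hlt]

/-! ### The final abstract computation -/

lemma abstract_final (W E Q F gW M : Matrix ι ι ℂ)
    (hWQ : W * Q = W)
    (hQW : Q * W = W)
    (hQEcomm : Q * E = E * Q)
    (hgWW : gW * W = Q)
    (hMWE : M * (W * E) = W * E)
    (hFgWM : F * (gW * M) = gW * M)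
    (hFE : F * E = F) :
    W * E * W = W * F * W := by
  have c1 : Q * E = gW * M * (W * E) := by
    rw [← hgWW, Matrix.mul_assoc gW W E]
    conv_lhs => rw [← hMWE]
    rw [← Matrix.mul_assoc gW M (W * E)]
  have hQE2 : Q * E = F * (Q * E) := by
    have h2 : F * (Q * E) = F * (gW * M * (W * E)) := by rw [c1]
    rw [h2, ← Matrix.mul_assoc F (gW * M) (W * E), hFgWM, ← c1]
  have step1 : W * (Q * E) * W = W * E * W := by
    rw [← Matrix.mul_assoc W Q E, hWQ]
  calc W * E * W = W * (Q * E) * W := step1.symm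
    _ = W * (F * (Q * E)) * W := by rw [← hQE2]
    _ = W * (F * (E * Q)) * W := by rw [hQEcomm]
    _ = W * F * W := by
        simp only [Matrix.mul_assoc]
        rw [hQW, ← Matrix.mul_assoc F E W, hFE]

end ACAux

set_option maxHeartbeats 1600000 in
/-- **Multiplicativity of the absolutely continuous part under Kronecker products.**
For PSD matrices `ρₖ, σₖ` (`k = 1, 2`):
`[σ₁ ⊗ σ₂](ρ₁ ⊗ ρ₂) = ([σ₁]ρ₁) ⊗ ([σ₂]ρ₂)`. -/
theorem acPart_kronecker {n₁ n₂ : ℕ}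
    (ρ₁ σ₁ : Matrix (Fin n₁) (Fin n₁) ℂ) (ρ₂ σ₂ : Matrix (Fin n₂) (Fin n₂) ℂ)
    (hρ₁ : ρ₁.PosSemidef) (hσ₁ : σ₁.PosSemidef)
    (hρ₂ : ρ₂.PosSemidef) (hσ₂ : σ₂.PosSemidef) :
    acPart (σ₁ ⊗ₖ σ₂) (ρ₁ ⊗ₖ ρ₂) = (acPart σ₁ ρ₁) ⊗ₖ (acPart σ₂ ρ₂) := by
  classical
  have hσs : (σ₁ ⊗ₖ σ₂).PosSemidef := ACAux.kron_psd hσ₁ hσ₂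
  have hρs : (ρ₁ ⊗ₖ ρ₂).PosSemidef := ACAux.kron_psd hρ₁ hρ₂
  have hWs : ACAux.Wm (ρ₁ ⊗ₖ ρ₂) = ACAux.Wm ρ₁ ⊗ₖ ACAux.Wm ρ₂ := ACAux.W_kron hρ₁ hρ₂
  have hSs : rangeProj (σ₁ ⊗ₖ σ₂) = rangeProj σ₁ ⊗ₖ rangeProj σ₂ :=
    ACAux.rangeProj_kron hσ₁ hσ₂
  have hMs : ACAux.Mm (σ₁ ⊗ₖ σ₂) (ρ₁ ⊗ₖ ρ₂) = ACAux.Mm σ₁ ρ₁ ⊗ₖ ACAux.Mm σ₂ ρ₂ :=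
    ACAux.M_kron hρ₁ hσ₁ hρ₂ hσ₂
  have hgWs : ginv (ACAux.Wm (ρ₁ ⊗ₖ ρ₂)) = ginv (ACAux.Wm ρ₁) ⊗ₖ ginv (ACAux.Wm ρ₂) := by
    rw [hWs]; exact ACAux.ginvW_kron hρ₁ hρ₂
  have hBsF : ACAux.Bm (σ₁ ⊗ₖ σ₂) (ρ₁ ⊗ₖ ρ₂) * (ACAux.Em σ₁ ρ₁ ⊗ₖ ACAux.Em σ₂ ρ₂) = 0 := by
    rw [ACAux.Bm, Matrix.mul_sub, Matrix.mul_one, Matrix.sub_mul, Matrix.sub_mul,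
      ACAux.W_mul_W hρs, ← Matrix.mul_kronecker_mul, hWs, hSs,
      ← Matrix.mul_kronecker_mul, ← Matrix.mul_kronecker_mul, ← Matrix.mul_kronecker_mul,
      ACAux.WSW_mul_E hσ₁ hρ₁, ACAux.WSW_mul_E hσ₂ hρ₂, sub_self]
  have hEF : ACAux.Em (σ₁ ⊗ₖ σ₂) (ρ₁ ⊗ₖ ρ₂) * (ACAux.Em σ₁ ρ₁ ⊗ₖ ACAux.Em σ₂ ρ₂)
      = ACAux.Em σ₁ ρ₁ ⊗ₖ ACAux.Em σ₂ ρ₂ := by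
    rw [show ACAux.Em (σ₁ ⊗ₖ σ₂) (ρ₁ ⊗ₖ ρ₂)
        = 1 - rangeProj (ACAux.Bm (σ₁ ⊗ₖ σ₂) (ρ₁ ⊗ₖ ρ₂)) from rfl,
      Matrix.sub_mul, Matrix.one_mul, ← ACAux.ginvB_mul_B hσs hρs, Matrix.mul_assoc, hBsF,
      Matrix.mul_zero, sub_zero]
  have hFherm : (ACAux.Em σ₁ ρ₁ ⊗ₖ ACAux.Em σ₂ ρ₂).IsHermitian :=
    ACAux.kron_isHermitian (ACAux.E_herm hσ₁ hρ₁) (ACAux.E_herm hσ₂ hρ₂)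
  have hFE : (ACAux.Em σ₁ ρ₁ ⊗ₖ ACAux.Em σ₂ ρ₂) * ACAux.Em (σ₁ ⊗ₖ σ₂) (ρ₁ ⊗ₖ ρ₂)
      = ACAux.Em σ₁ ρ₁ ⊗ₖ ACAux.Em σ₂ ρ₂ := by
    have h := congrArg Matrix.conjTranspose hEF
    rwa [Matrix.conjTranspose_mul, (ACAux.E_herm hσs hρs).eq, hFherm.eq] at h
  have hTX : (rangeProj (σ₁ ⊗ₖ σ₂) * rangeProj (ρ₁ ⊗ₖ ρ₂) * rangeProj (σ₁ ⊗ₖ σ₂))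
        * (ACAux.Wm (ρ₁ ⊗ₖ ρ₂) * ACAux.Em (σ₁ ⊗ₖ σ₂) (ρ₁ ⊗ₖ ρ₂))
      = ACAux.Wm (ρ₁ ⊗ₖ ρ₂) * ACAux.Em (σ₁ ⊗ₖ σ₂) (ρ₁ ⊗ₖ ρ₂) := by
    calc (rangeProj (σ₁ ⊗ₖ σ₂) * rangeProj (ρ₁ ⊗ₖ ρ₂) * rangeProj (σ₁ ⊗ₖ σ₂))
          * (ACAux.Wm (ρ₁ ⊗ₖ ρ₂) * ACAux.Em (σ₁ ⊗ₖ σ₂) (ρ₁ ⊗ₖ ρ₂))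
        = rangeProj (σ₁ ⊗ₖ σ₂) * (rangeProj (ρ₁ ⊗ₖ ρ₂) * (rangeProj (σ₁ ⊗ₖ σ₂)
            * (ACAux.Wm (ρ₁ ⊗ₖ ρ₂) * ACAux.Em (σ₁ ⊗ₖ σ₂) (ρ₁ ⊗ₖ ρ₂)))) := by
          simp only [Matrix.mul_assoc]
      _ = rangeProj (σ₁ ⊗ₖ σ₂) * (rangeProj (ρ₁ ⊗ₖ ρ₂)
            * (ACAux.Wm (ρ₁ ⊗ₖ ρ₂) * ACAux.Em (σ₁ ⊗ₖ σ₂) (ρ₁ ⊗ₖ ρ₂))) := by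
          rw [ACAux.SWE hσs hρs]
      _ = rangeProj (σ₁ ⊗ₖ σ₂) * (rangeProj (ρ₁ ⊗ₖ ρ₂)
            * ACAux.Wm (ρ₁ ⊗ₖ ρ₂) * ACAux.Em (σ₁ ⊗ₖ σ₂) (ρ₁ ⊗ₖ ρ₂)) := by
          rw [Matrix.mul_assoc]
      _ = rangeProj (σ₁ ⊗ₖ σ₂)
            * (ACAux.Wm (ρ₁ ⊗ₖ ρ₂) * ACAux.Em (σ₁ ⊗ₖ σ₂) (ρ₁ ⊗ₖ ρ₂)) := by
          rw [ACAux.Q_mul_W hρs]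
      _ = ACAux.Wm (ρ₁ ⊗ₖ ρ₂) * ACAux.Em (σ₁ ⊗ₖ σ₂) (ρ₁ ⊗ₖ ρ₂) := ACAux.SWE hσs hρs
  have hMWE : ACAux.Mm (σ₁ ⊗ₖ σ₂) (ρ₁ ⊗ₖ ρ₂)
        * (ACAux.Wm (ρ₁ ⊗ₖ ρ₂) * ACAux.Em (σ₁ ⊗ₖ σ₂) (ρ₁ ⊗ₖ ρ₂))
      = ACAux.Wm (ρ₁ ⊗ₖ ρ₂) * ACAux.Em (σ₁ ⊗ₖ σ₂) (ρ₁ ⊗ₖ ρ₂) := by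
    rw [ACAux.Mm]
    have h := ACAux.mfun_mul_fixed (ACAux.T_psd hσs hρs).1 (fun x => if x = 1 then 1 else 0)
      _ hTX
    simpa using h
  have hFgWM : (ACAux.Em σ₁ ρ₁ ⊗ₖ ACAux.Em σ₂ ρ₂)
        * (ginv (ACAux.Wm (ρ₁ ⊗ₖ ρ₂)) * ACAux.Mm (σ₁ ⊗ₖ σ₂) (ρ₁ ⊗ₖ ρ₂))
      = ginv (ACAux.Wm (ρ₁ ⊗ₖ ρ₂)) * ACAux.Mm (σ₁ ⊗ₖ σ₂) (ρ₁ ⊗ₖ ρ₂) := by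
    rw [hgWs, hMs, ← Matrix.mul_kronecker_mul, ← Matrix.mul_kronecker_mul,
      ACAux.E_mul_ginvW_M hσ₁ hρ₁, ACAux.E_mul_ginvW_M hσ₂ hρ₂]
  have key := ACAux.abstract_final (ACAux.Wm (ρ₁ ⊗ₖ ρ₂)) (ACAux.Em (σ₁ ⊗ₖ σ₂) (ρ₁ ⊗ₖ ρ₂))
    (rangeProj (ρ₁ ⊗ₖ ρ₂)) (ACAux.Em σ₁ ρ₁ ⊗ₖ ACAux.Em σ₂ ρ₂)
    (ginv (ACAux.Wm (ρ₁ ⊗ₖ ρ₂))) (ACAux.Mm (σ₁ ⊗ₖ σ₂) (ρ₁ ⊗ₖ ρ₂))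
    (ACAux.W_mul_Q hρs) (ACAux.Q_mul_W hρs) (ACAux.E_mul_Q_comm hσs hρs).symm
    (ACAux.ginvW_mul_W hρs) hMWE hFgWM hFE
  rw [ACAux.acPart_eq hσs hρs, key, ACAux.acPart_eq hσ₁ hρ₁, ACAux.acPart_eq hσ₂ hρ₂,
    hWs, ← Matrix.mul_kronecker_mul, ← Matrix.mul_kronecker_mul]
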